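/- arXiv:2306.17083 — 2 statements merged into one kernel-verified Lean document; each statement's English description precedes it below -/
import Mathlib

section
/- Let x ≠ y ∈ {0,1}^n, let S be the stabilizer group of the code space C = span(|x⟩, |y⟩) (the group of signed Pauli-Z strings fixing both |x⟩ and |y⟩), and let X̂ be the logical X operator flipping exactly the bits where x and y differ. Then |x⟩⟨y| + |y⟩⟨x| = (1/|S|) Σ_{g ∈ S} X̂ g. -/
open scoped Matrix

/-- Computational basis state `|x⟩` of `(ℂ²)^{⊗n}`. -/
def ket {n : ℕ} (x : Fin n → Bool) : (Fin n → Bool) → ℂ :=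
  fun z => if z = x then 1 else 0

/-- The eigenvalue (`±1`, as an integer) of the signed Pauli-Z string with sign `s`
and `Z` exactly on the qubits in `b`, on the computational basis state `z`. -/
def zEig {n : ℕ} (s : Bool) (b : Fin n → Bool) (z : Fin n → Bool) : ℤ :=
  (if s then 1 else -1) * ∏ i, (if b i && z i then -1 else 1)

/-- The signed Pauli-Z string `(±1)·Z^{b}` as a diagonal matrix. -/
def zMat {n : ℕ} (s : Bool) (b : Fin n → Bool) :
    Matrix (Fin n → Bool) (Fin n → Bool) ℂ :=
  Matrix.diagonal fun z => (zEig s b z : ℂ)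

/-- The Pauli string with `X` exactly on the qubits in `a` (a permutation matrix
flipping those bits). -/
def xMat {n : ℕ} (a : Fin n → Bool) : Matrix (Fin n → Bool) (Fin n → Bool) ℂ :=
  Matrix.of fun z w => if w = (fun i => if a i then !(z i) else z i) then 1 else 0

/-- The stabilizer group of `C = span(|x⟩,|y⟩)`: all signed Pauli-Z strings fixing
both `|x⟩` and `|y⟩`, encoded as pairs (sign, support). -/
def stab {n : ℕ} (x y : Fin n → Bool) : Finset (Bool × (Fin n → Bool)) :=
  Finset.univ.filter fun p => zEig p.1 p.2 x = 1 ∧ zEig p.1 p.2 y = 1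

noncomputable def eC (s : Bool) : ℂ := if s then 1 else -1

noncomputable def PC {n : ℕ} (b z : Fin n → Bool) : ℂ :=
  ∏ i, if b i && z i then (-1 : ℂ) else 1

@[simp] lemma eC_true : eC true = 1 := rfl
@[simp] lemma eC_false : eC false = -1 := rfl

lemma zEig_cast {n : ℕ} (s : Bool) (b z : Fin n → Bool) :
    ((zEig s b z : ℤ) : ℂ) = eC s * PC b z := by
  simp [zEig, eC, PC, apply_ite (fun t : ℤ => (t : ℂ))]

lemma PC_mul {n : ℕ} (b z w : Fin n → Bool) :
    PC b z * PC b w = PC b (fun i => z i != w i) := by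
  simp only [PC, ← Finset.prod_mul_distrib]
  refine Finset.prod_congr rfl fun i _ => ?_
  rcases Bool.dichotomy (b i) with hb | hb <;> rcases Bool.dichotomy (z i) with hz | hz <;>
    rcases Bool.dichotomy (w i) with hw | hw <;> simp [hb, hz, hw]

lemma PC_sum {n : ℕ} (v : Fin n → Bool) :
    ∑ b : Fin n → Bool, PC b v = if v = (fun _ => false) then (2:ℂ)^n else 0 := by
  have h : (∏ i, ∑ c : Bool, (if c && v i then (-1:ℂ) else 1))
      = ∑ b : Fin n → Bool, PC b v := by
    rw [Finset.prod_univ_sum, Fintype.piFinset_univ]; rfl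
  rw [← h]
  by_cases hv : v = fun _ => false
  · subst hv; simp
  · rw [if_neg hv]
    obtain ⟨i, hi⟩ : ∃ i, v i = true := by
      by_contra hcon
      push_neg at hcon
      exact hv (funext fun i => by simpa using hcon i)
    refine Finset.prod_eq_zero (Finset.mem_univ i) ?_
    simp [hi, Fintype.sum_bool]


lemma PC_pm {n : ℕ} (b z : Fin n → Bool) : PC b z = 1 ∨ PC b z = -1 := by
  refine Finset.prod_induction _ (fun t => t = 1 ∨ t = -1) ?_ (Or.inl rfl) ?_
  · rintro a c (rfl|rfl) (rfl|rfl) <;> norm_num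
  · intro i _; by_cases h : b i && z i <;> simp [h]

lemma ePC_pm {n : ℕ} (s : Bool) (b z : Fin n → Bool) :
    eC s * PC b z = 1 ∨ eC s * PC b z = -1 := by
  cases s <;> rcases PC_pm b z with h|h <;> simp [h]

lemma mem_stab {n : ℕ} (x y : Fin n → Bool) (p : Bool × (Fin n → Bool)) :
    p ∈ stab x y ↔ eC p.1 * PC p.2 x = 1 ∧ eC p.1 * PC p.2 y = 1 := by
  simp only [stab, Finset.mem_filter, Finset.mem_univ, true_and]
  rw [← zEig_cast, ← zEig_cast]
  constructor
  · rintro ⟨h1, h2⟩; exact ⟨by exact_mod_cast h1, by exact_mod_cast h2⟩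
  · rintro ⟨h1, h2⟩; exact ⟨by exact_mod_cast h1, by exact_mod_cast h2⟩

lemma sum_over_stab {n : ℕ} (x y : Fin n → Bool) (f : Bool × (Fin n → Bool) → ℂ) :
    ∑ p ∈ stab x y, (4:ℂ) * f p =
    ∑ p : Bool × (Fin n → Bool),
      (1 + eC p.1 * PC p.2 x) * (1 + eC p.1 * PC p.2 y) * f p := by
  have h1 : ∑ p ∈ stab x y, (4:ℂ) * f p =
      ∑ p ∈ stab x y, (1 + eC p.1 * PC p.2 x) * (1 + eC p.1 * PC p.2 y) * f p := by
    refine Finset.sum_congr rfl fun p hp => ?_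
    rw [mem_stab] at hp
    rw [hp.1, hp.2]; ring
  rw [h1]
  refine Finset.sum_subset (Finset.subset_univ (stab x y)) ?_
  intro p _ hp
  rw [mem_stab] at hp
  by_cases hA : eC p.1 * PC p.2 x = 1
  · have hB : eC p.1 * PC p.2 y = -1 :=
      (ePC_pm p.1 p.2 y).resolve_left (fun h => hp ⟨hA, h⟩)
    rw [hB]; ring
  · have hA' : eC p.1 * PC p.2 x = -1 := (ePC_pm p.1 p.2 x).resolve_left hA
    rw [hA']; ring

lemma expand_f {n : ℕ} (x y w : Fin n → Bool) :
    ∑ p : Bool × (Fin n → Bool),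
        (1 + eC p.1 * PC p.2 x) * (1 + eC p.1 * PC p.2 y) * (eC p.1 * PC p.2 w)
    = 2 * (∑ b : Fin n → Bool, PC b (fun i => x i != w i))
      + 2 * (∑ b : Fin n → Bool, PC b (fun i => y i != w i)) := by
  rw [Fintype.sum_prod_type, Fintype.sum_bool, ← Finset.sum_add_distrib,
    Finset.mul_sum, Finset.mul_sum, ← Finset.sum_add_distrib]
  refine Finset.sum_congr rfl fun b _ => ?_
  rw [← PC_mul b x w, ← PC_mul b y w]
  simp only [eC_true, eC_false]
  ring

lemma expand_1 {n : ℕ} (x y : Fin n → Bool) :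
    ∑ p : Bool × (Fin n → Bool),
        (1 + eC p.1 * PC p.2 x) * (1 + eC p.1 * PC p.2 y) * 1
    = 2 * 2^n + 2 * ∑ b : Fin n → Bool, PC b (fun i => x i != y i) := by
  rw [Fintype.sum_prod_type, Fintype.sum_bool, ← Finset.sum_add_distrib]
  have h : ∀ b : Fin n → Bool,
      (1 + eC true * PC b x) * (1 + eC true * PC b y) * 1
        + (1 + eC false * PC b x) * (1 + eC false * PC b y) * 1
      = 2 + 2 * PC b (fun i => x i != y i) := by
    intro b; rw [← PC_mul b x y]; simp only [eC_true, eC_false]; ring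
  rw [Finset.sum_congr rfl fun b _ => h b, Finset.sum_add_distrib,
    Finset.sum_const, ← Finset.mul_sum]
  simp [Finset.card_univ, mul_comm]

lemma bne_fun {n : ℕ} (x w : Fin n → Bool) :
    ((fun i => x i != w i) = fun _ => false) ↔ w = x := by
  constructor
  · intro h; funext i
    have h2 := congrFun h i
    rcases Bool.dichotomy (x i) with hx|hx <;> rcases Bool.dichotomy (w i) with hw|hw <;>
      simp [hx, hw] at h2 ⊢
  · rintro rfl; funext i; simp

lemma flip_x {n : ℕ} (x y z : Fin n → Bool) :
    (x = fun i => if (x i != y i) = true then !(z i) else z i) ↔ z = y := by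
  constructor
  · intro h; funext i; have h2 := congrFun h i
    rcases Bool.dichotomy (x i) with hx|hx <;> rcases Bool.dichotomy (y i) with hy|hy <;>
      rcases Bool.dichotomy (z i) with hz|hz <;> simp [hx, hy, hz] at h2 ⊢
  · rintro rfl; funext i
    rcases Bool.dichotomy (x i) with hx|hx <;> rcases Bool.dichotomy (z i) with hz|hz <;>
      simp [hx, hz]

lemma flip_y {n : ℕ} (x y z : Fin n → Bool) :
    (y = fun i => if (x i != y i) = true then !(z i) else z i) ↔ z = x := by
  constructor
  · intro h; funext i; have h2 := congrFun h i
    rcases Bool.dichotomy (x i) with hx|hx <;> rcases Bool.dichotomy (y i) with hy|hy <;>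
      rcases Bool.dichotomy (z i) with hz|hz <;> simp [hx, hy, hz] at h2 ⊢
  · rintro rfl; funext i
    rcases Bool.dichotomy (y i) with hy|hy <;> rcases Bool.dichotomy (z i) with hz|hz <;>
      simp [hy, hz]

/-- For `x ≠ y ∈ {0,1}^n`, with `S` the stabilizer of
`C = span(|x⟩,|y⟩)` and `X̂` the logical X flipping exactly the bits where `x`
and `y` differ: `|x⟩⟨y| + |y⟩⟨x| = (1/|S|) Σ_{g ∈ S} X̂ g`. -/
theorem mixer_eq_average_of_logical_X {n : ℕ} (x y : Fin n → Bool) (hxy : x ≠ y) :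
    Matrix.vecMulVec (ket x) (ket y) + Matrix.vecMulVec (ket y) (ket x) =
      (((stab x y).card : ℂ))⁻¹ •
        ∑ p ∈ stab x y, xMat (fun i => x i != y i) * zMat p.1 p.2 := by
  have h2n : (2:ℂ)^n ≠ 0 := pow_ne_zero _ two_ne_zero
  have hxyb : ¬ ((fun i => x i != y i) = fun _ => false) := by
    rw [bne_fun]; exact fun h => hxy h.symm
  have hcard : (4:ℂ) * ((stab x y).card : ℂ) = 2 * 2^n := by
    have h := sum_over_stab x y (fun _ => 1)
    rw [expand_1, PC_sum, if_neg hxyb, mul_zero, add_zero, Finset.sum_const] at h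
    rw [← h]; simp [mul_comm]
  have hc0 : ((stab x y).card : ℂ) ≠ 0 := by
    intro h; rw [h, mul_zero] at hcard
    exact (mul_ne_zero two_ne_zero h2n) hcard.symm
  have hT : ∀ w : Fin n → Bool, (4:ℂ) * ∑ p ∈ stab x y, ((zEig p.1 p.2 w : ℤ) : ℂ)
      = 2 * 2^n * ((if w = x then 1 else 0) + (if w = y then 1 else 0)) := by
    intro w
    rw [Finset.mul_sum]
    simp only [zEig_cast]
    rw [sum_over_stab x y (fun p => eC p.1 * PC p.2 w), expand_f, PC_sum, PC_sum]
    simp only [bne_fun]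
    by_cases hwx : w = x <;> by_cases hwy : w = y <;> simp [hwx, hwy, hxy, Ne.symm hxy]
  ext z w
  simp only [Matrix.add_apply, Matrix.vecMulVec_apply, Matrix.smul_apply,
    Matrix.sum_apply, smul_eq_mul, zMat, Matrix.mul_diagonal]
  rw [eq_inv_mul_iff_mul_eq₀ hc0, ← Finset.mul_sum]
  refine mul_left_cancel₀ (show (4:ℂ) ≠ 0 by norm_num) ?_
  have hcore : ket x z * ket y w + ket y z * ket x w
      = xMat (fun i => x i != y i) z w
        * ((if w = x then 1 else 0) + (if w = y then 1 else 0)) := by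
    simp only [ket, xMat, Matrix.of_apply]
    by_cases hwx : w = x
    · rw [hwx]
      simp only [flip_x x y z, if_neg hxy, if_pos rfl]
      ring
    · by_cases hwy : w = y
      · rw [hwy]
        have hyx : y ≠ x := fun h => hxy h.symm
        simp only [flip_y x y z, if_neg hyx, if_pos rfl]
        ring
      · simp [hwx, hwy]
  calc (4:ℂ) * (((stab x y).card : ℂ) * (ket x z * ket y w + ket y z * ket x w))
      = (4 * ((stab x y).card : ℂ)) * (ket x z * ket y w + ket y z * ket x w) := by ring
    _ = 2 * 2^n * (ket x z * ket y w + ket y z * ket x w) := by rw [hcard]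
    _ = xMat (fun i => x i != y i) z w
          * (2 * 2^n * ((if w = x then 1 else 0) + (if w = y then 1 else 0))) := by
        rw [hcore]; ring
    _ = xMat (fun i => x i != y i) z w
          * (4 * ∑ p ∈ stab x y, ((zEig p.1 p.2 w : ℤ) : ℂ)) := by rw [hT w]
    _ = 4 * (xMat (fun i => x i != y i) z w
          * ∑ p ∈ stab x y, ((zEig p.1 p.2 w : ℤ) : ℂ)) := by ring
end

section
/- Let S be a stabilizer group with |S| elements s₁,…,s_{|S|}, each Hermitian unitary, with common +1 eigenspace span(V). Let B ⊇ V be a set of common eigenvectors of all s_j, and define A ∈ {±1}^{m × |S|} by A_{ij} = eigenvalue of s_j on x_i, for the m states x_i ∈ B outside the invariant subspace. If v ∈ ℝ^{|S|} satisfies Av = 0 and Σ_i v_i ≠ 0, then P = (Σ_i v_i)^{-1} Σ_i v_i s_i satisfies P x = x for all x ∈ span(V) and P x_i = 0 for all the m states x_i. -/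
open scoped Matrix

lemma sum_mulVec_aux {N M : ℕ} (f : Fin M → Matrix (Fin N) (Fin N) ℂ)
    (w : Fin N → ℂ) : (∑ j, f j) *ᵥ w = ∑ j, f j *ᵥ w := by
  ext k
  simp [Matrix.mulVec, dotProduct, Matrix.sum_apply, Finset.sum_mul]
  rw [Finset.sum_comm]

/-- Let `S` be a stabilizer group listed as `s 1, …, s M` (each a
Hermitian unitary, e.g. a signed Pauli-Z string), with common `+1` eigenspace
`span(V)`.  Let `x 1, …, x m` be common eigenvectors of all `s j` (the feasible
states outside the invariant subspace), with eigenvalues `A i j ∈ {±1}`.  If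
`v ∈ ℝ^M` satisfies `A v = 0` and `Σ_j v j ≠ 0`, then
`P = (Σ_j v j)⁻¹ Σ_j v j • s j` fixes every vector fixed by all the `s j` and
annihilates every `x i`. -/
theorem restricted_projector_from_kernel {N M m : ℕ}
    (s : Fin M → Matrix (Fin N) (Fin N) ℂ)
    (hherm : ∀ j, (s j)ᴴ = s j) (hsq : ∀ j, s j * s j = 1)
    (x : Fin m → (Fin N → ℂ))
    (A : Matrix (Fin m) (Fin M) ℝ)
    (hApm : ∀ i j, A i j = 1 ∨ A i j = -1)
    (heig : ∀ i j, (s j).mulVec (x i) = (A i j : ℂ) • x i)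
    (v : Fin M → ℝ) (hker : A.mulVec v = 0) (hsum : ∑ j, v j ≠ 0) :
    let P : Matrix (Fin N) (Fin N) ℂ :=
      ((∑ j, v j : ℝ) : ℂ)⁻¹ • ∑ j, (v j : ℂ) • s j
    (∀ w : Fin N → ℂ, (∀ j, (s j).mulVec w = w) → P.mulVec w = w) ∧
      ∀ i, P.mulVec (x i) = 0 := by
  intro P
  have hc : ((∑ j, v j : ℝ) : ℂ) ≠ 0 := by exact_mod_cast hsum
  have key : ∀ w : Fin N → ℂ, P.mulVec w =
      ((∑ j, v j : ℝ) : ℂ)⁻¹ • ∑ j, (v j : ℂ) • (s j).mulVec w := by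
    intro w
    simp only [P, Matrix.smul_mulVec, sum_mulVec_aux,
      Matrix.smul_mulVec]
  constructor
  · intro w hw
    rw [key]
    simp only [hw, ← Finset.sum_smul, ← smul_assoc, smul_eq_mul,
      inv_mul_cancel₀ hc, one_smul]
    norm_cast
    rw [inv_mul_cancel₀ hsum, one_smul]
  · intro i
    rw [key]
    have h0 : (∑ j, (v j : ℂ) • (s j).mulVec (x i)) = 0 := by
      have h1 : (∑ j, A i j * v j : ℝ) = 0 := by
        have := congrFun hker i
        simpa [Matrix.mulVec, dotProduct] using this
      calc (∑ j, (v j : ℂ) • (s j).mulVec (x i))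
          = ∑ j, ((A i j * v j : ℝ) : ℂ) • x i := by
            refine Finset.sum_congr rfl fun j _ => ?_
            rw [heig, smul_smul]; push_cast; ring_nf
        _ = ((∑ j, A i j * v j : ℝ) : ℂ) • x i := by
            rw [← Finset.sum_smul]; push_cast; rfl
        _ = 0 := by rw [h1]; simp
    rw [h0, smul_zero]
end
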